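/- arXiv:1308.3101 — 2 statements merged into one kernel-verified Lean document; each statement's English description precedes it below -/
import Mathlib

section
/- Let f¹, …, fⁿ : ℝ^d → ℝ ∪ {∞} be proper convex l.s.c. functions, each with recession function equal to the indicator of {0} (equivalently, each fⁱ has bounded domain). Then min over ξ ∈ ℝ^d of (min over i of fⁱ(ξ)) equals min over z in the unit simplex Δⁿ and w¹,…,wⁿ ∈ ℝ^d of Σᵢ f̃ⁱ(zⁱ, wⁱ), where f̃ⁱ is the l.s.c. perspective of fⁱ. -/
open scoped BigOperators

/-- Dot product on `Fin d → ℝ`. -/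
noncomputable def dotR {d : ℕ} (a b : Fin d → ℝ) : ℝ := ∑ i, a i * b i

/-- Fenchel convex conjugate of an extended-real-valued function. -/
noncomputable def econj {d : ℕ} (f : (Fin d → ℝ) → EReal) (ν : Fin d → ℝ) : EReal :=
  ⨆ x : Fin d → ℝ, ((dotR ν x : ℝ) : EReal) - f x

/-- The l.s.c. perspective of `f`, defined via the biconjugate. -/
noncomputable def epersp {d : ℕ} (f : (Fin d → ℝ) → EReal) (z : ℝ) (w : Fin d → ℝ) : EReal :=
  ⨆ p : {p : ℝ × (Fin d → ℝ) // ((p.1 : EReal) + econj f p.2 ≤ 0)},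
    ((z * p.1.1 + dotR w p.1.2 : ℝ) : EReal)

/-- Convexity for extended-real-valued functions. -/
def EConvex {d : ℕ} (f : (Fin d → ℝ) → EReal) : Prop :=
  ∀ x y : Fin d → ℝ, ∀ a b : ℝ, 0 ≤ a → 0 ≤ b → a + b = 1 →
    f (a • x + b • y) ≤ (a : EReal) * f x + (b : EReal) * f y

/-- Properness: never `⊥` and not identically `⊤`. -/
def EProper {d : ℕ} (f : (Fin d → ℝ) → EReal) : Prop :=
  (∀ x, f x ≠ ⊥) ∧ ∃ x, f x ≠ ⊤

/-! A constant minorant `c ≤ fⁱ` makes `(c, 0)` feasible in the supremum defining the perspective,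
so `f̃ⁱ(zⁱ, wⁱ) ≥ zⁱ c`; taking for `c` the attained minimum of `minᵢ fⁱ` and summing with
`Σ zⁱ = 1` bounds the right side below. Conversely, Fenchel–Young gives `f̃(1, ξ) ≤ f(ξ)` and
`f̃(0, 0) ≤ 0`, so the vertex `z = eᵢ`, `w = ξ eᵢ` of the simplex costs at most `fⁱ(ξ)`. -/

theorem EReal.coe_finset_sum {ι : Type*} (s : Finset ι) (g : ι → ℝ) :
    ((∑ i ∈ s, g i : ℝ) : EReal) = ∑ i ∈ s, (g i : EReal) :=
  map_sum (⟨⟨Real.toEReal, EReal.coe_zero⟩, EReal.coe_add⟩ : ℝ →+ EReal) g s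

theorem LowerSemicontinuous.exists_forall_le_of_isBounded {E β : Type*} [PseudoMetricSpace E]
    [ProperSpace E] [LinearOrder β] [OrderTop β] {f : E → β} (hf : LowerSemicontinuous f)
    (hne : ∃ x, f x ≠ ⊤) (hbdd : Bornology.IsBounded {x | f x ≠ ⊤}) :
    ∃ x₀, ∀ x, f x₀ ≤ f x := by
  obtain ⟨x₁, hx₁⟩ := hne
  obtain ⟨x₀, -, hmin⟩ := (hf.lowerSemicontinuousOn _).exists_isMinOn ⟨x₁, subset_closure hx₁⟩
    hbdd.isCompact_closure
  refine ⟨x₀, fun x => ?_⟩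
  by_cases hx : f x = ⊤
  · exact hx ▸ le_top
  · exact hmin (subset_closure hx)

section Perspective

variable {d : ℕ} {f : (Fin d → ℝ) → EReal}

theorem dotR_comm (a b : Fin d → ℝ) : dotR a b = dotR b a := by
  simp only [dotR, mul_comm]

@[simp]
theorem dotR_zero_left (b : Fin d → ℝ) : dotR 0 b = 0 := by
  simp [dotR]

@[simp]
theorem dotR_zero_right (a : Fin d → ℝ) : dotR a 0 = 0 := by
  simp [dotR]

theorem coe_add_econj_zero_nonpos {c : ℝ} (hc : ∀ x, (c : EReal) ≤ f x) :
    (c : EReal) + econj f 0 ≤ 0 := by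
  have hconj : econj f 0 ≤ -(c : EReal) :=
    iSup_le fun x => by simpa using EReal.neg_le_neg_iff.2 (hc x)
  calc (c : EReal) + econj f 0 ≤ c + -(c : EReal) := add_le_add_right hconj _
    _ = 0 := by rw [← EReal.coe_neg, ← EReal.coe_add, add_neg_cancel, EReal.coe_zero]

/-- Fenchel–Young inequality, read on the constraint set of `epersp`. -/
theorem coe_add_dotR_le_of_add_econj_nonpos {t : ℝ} {ν : Fin d → ℝ}
    (h : (t : EReal) + econj f ν ≤ 0) (ξ : Fin d → ℝ) : ((t + dotR ξ ν : ℝ) : EReal) ≤ f ξ := by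
  have hyoung : (dotR ν ξ : EReal) - f ξ ≤ econj f ν :=
    le_iSup (fun x => ((dotR ν x : ℝ) : EReal) - f x) ξ
  generalize f ξ = y at hyoung ⊢
  induction y using EReal.rec with
  | bot =>
    rw [EReal.coe_sub_bot, top_le_iff] at hyoung
    simp [hyoung] at h
  | coe r =>
    rw [← EReal.coe_sub] at hyoung
    have : ((t + (dotR ν ξ - r) : ℝ) : EReal) ≤ 0 :=
      (EReal.coe_add _ _ ▸ add_le_add_right hyoung _).trans h
    have : t + (dotR ν ξ - r) ≤ 0 := by exact_mod_cast this
    exact EReal.coe_le_coe_iff.2 (by linarith [dotR_comm ξ ν])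
  | top => exact le_top

theorem coe_mul_le_epersp {c : ℝ} (hc : ∀ x, (c : EReal) ≤ f x) (z : ℝ) (w : Fin d → ℝ) :
    ((z * c : ℝ) : EReal) ≤ epersp f z w := by
  unfold epersp
  exact le_iSup_of_le ⟨(c, 0), coe_add_econj_zero_nonpos hc⟩ (by simp)

theorem epersp_one_le (ξ : Fin d → ℝ) : epersp f 1 ξ ≤ f ξ :=
  iSup_le fun p => by simpa using coe_add_dotR_le_of_add_econj_nonpos p.2 ξ

theorem epersp_zero_zero_le : epersp f 0 0 ≤ 0 :=
  iSup_le fun p => by simp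

end Perspective

section Simplex

variable {d : ℕ} {ι : Type*} [Fintype ι] {f : ι → (Fin d → ℝ) → EReal}

theorem coe_le_sum_epersp {c : ℝ} (hc : ∀ i x, (c : EReal) ≤ f i x) {z : ι → ℝ}
    (hz : z ∈ stdSimplex ℝ ι) (w : ι → Fin d → ℝ) :
    (c : EReal) ≤ ∑ i, epersp (f i) (z i) (w i) :=
  calc (c : EReal) = ((∑ i, z i * c : ℝ) : EReal) := by rw [← Finset.sum_mul, hz.2, one_mul]
    _ = ∑ i, ((z i * c : ℝ) : EReal) := EReal.coe_finset_sum _ _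
    _ ≤ ∑ i, epersp (f i) (z i) (w i) :=
      Finset.sum_le_sum fun i _ => coe_mul_le_epersp (hc i) (z i) (w i)

theorem sum_epersp_single_le [DecidableEq ι] (i : ι) (ξ : Fin d → ℝ) :
    ∑ j, epersp (f j) ((Pi.single i 1 : ι → ℝ) j) ((Pi.single i ξ : ι → Fin d → ℝ) j) ≤ f i ξ :=
  calc ∑ j, epersp (f j) ((Pi.single i 1 : ι → ℝ) j) ((Pi.single i ξ : ι → Fin d → ℝ) j)
      ≤ ∑ j, Pi.single i (f i ξ) j := Finset.sum_le_sum fun j _ => by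
        rcases eq_or_ne j i with rfl | hj
        · simpa using epersp_one_le ξ
        · simpa [hj] using epersp_zero_zero_le
    _ = f i ξ := by simp

end Simplex

theorem min_of_min_eq_min_persp_general {d n : ℕ} (f : Fin n → (Fin d → ℝ) → EReal)
    (hproper : ∀ i, EProper (f i))
    (hlsc : ∀ i, LowerSemicontinuous (f i))
    (hbdd : ∀ i, Bornology.IsBounded {x | f i x ≠ ⊤}) :
    (⨅ ξ : Fin d → ℝ, ⨅ i, f i ξ)
      = ⨅ z : {z : Fin n → ℝ // z ∈ stdSimplex ℝ (Fin n)},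
          ⨅ w : Fin n → (Fin d → ℝ), ∑ i, epersp (f i) (z.1 i) (w i) := by
  choose x₀ hx₀ using fun i => (hlsc i).exists_forall_le_of_isBounded (hproper i).2 (hbdd i)
  apply le_antisymm
  · refine le_iInf fun ⟨z, hz⟩ => le_iInf fun w => ?_
    obtain ⟨i₀, -, hi₀⟩ := Finset.univ.exists_min_image (fun i => f i (x₀ i))
      (Finset.nonempty_of_sum_ne_zero (hz.2.symm ▸ one_ne_zero))
    obtain ⟨x₁, hx₁⟩ := (hproper i₀).2
    set m := f i₀ (x₀ i₀)
    have hm : (m.toReal : EReal) = m :=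
      EReal.coe_toReal (ne_top_of_le_ne_top hx₁ (hx₀ i₀ x₁)) ((hproper i₀).1 _)
    calc ⨅ ξ, ⨅ i, f i ξ ≤ m := (iInf_le _ _).trans (iInf_le _ _)
      _ = m.toReal := hm.symm
      _ ≤ _ := coe_le_sum_epersp (fun i x => hm ▸ (hi₀ i (Finset.mem_univ i)).trans (hx₀ i x)) hz w
  · refine le_iInf fun ξ => le_iInf fun i => ?_
    exact iInf_le_of_le ⟨_, single_mem_stdSimplex ℝ i⟩ <| iInf_le_of_le (Pi.single i ξ) <|
      sum_epersp_single_le i ξ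

/-- for proper convex l.s.c. functions `f i` with bounded effective
domain, the minimum of the pointwise minimum equals the minimum over the simplex
of the sum of perspectives. -/
theorem min_of_min_eq_min_persp {d n : ℕ} (f : Fin n → (Fin d → ℝ) → EReal)
    (hproper : ∀ i, EProper (f i)) (hconv : ∀ i, EConvex (f i))
    (hlsc : ∀ i, LowerSemicontinuous (f i))
    (hbdd : ∀ i, Bornology.IsBounded {x | f i x ≠ ⊤}) :
    (⨅ ξ : Fin d → ℝ, ⨅ i, f i ξ)
      = ⨅ z : {z : Fin n → ℝ // z ∈ stdSimplex ℝ (Fin n)},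
          ⨅ w : Fin n → (Fin d → ℝ), ∑ i, epersp (f i) (z.1 i) (w i) :=
  min_of_min_eq_min_persp_general f hproper hlsc hbdd
end

section
/- Let ϑ(h) = min_k ( α^k |h| + β^k ) with α^k, β^k ≥ 0 be a concave-type min-of-L¹ potential on h ∈ {−(L−1),…,L−1}, and θ^{ij} = ϑ^{j−i}. For fixed x_s, x_t ∈ Δ^L, the standard per-edge LP value min over x_{st} ∈ M(x_s,x_t) of Σ_{ij} θ^{ij} x_{st}^{ij} equals the minimum of Σ_k ( α^k Σ_i |Y_s^{ki} − Y_t^{ki}| + (β^k/2)(Σ_i y_s^{ki} + Σ_i y_t^{ki}) ) over nonnegative variables y_s^{k}, y_t^{k} ∈ ℝ^L_{≥0} satisfying Σ_k y_s^{ki} = x_s^i, Σ_k y_t^{ki} = x_t^i for all i, and Σ_i y_s^{ki} = Σ_i y_t^{ki} for all k, where Y^{ki} denotes cumulative sums of y^{k} within branch k. -/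
open scoped BigOperators

/-- Cumulative sums of `x : Fin L → ℝ`, extended to all integer indices:
`cum x i = Σ_{j < i} x j` (so it is `0` for `i ≤ 0` and the total mass for `i ≥ L`). -/
noncomputable def cum {L : ℕ} (x : Fin L → ℝ) (i : ℤ) : ℝ :=
  ∑ j : Fin L, if (j : ℤ) < i then x j else 0

/-- The transportation polytope `M(xs, xt) ⊆ Δ^{L²}`: joint distributions with
marginals `xs` and `xt`. -/
def marg (L : ℕ) (xs xt : Fin L → ℝ) : Set (Fin L → Fin L → ℝ) :=
  {x | (∀ i j, 0 ≤ x i j) ∧ (∑ i, ∑ j, x i j) = 1 ∧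
    (∀ i, xs i = ∑ j, x i j) ∧ (∀ j, xt j = ∑ i, x i j)}

/-!
Both problems split into `K` one-dimensional transport problems. Given a plan `x ∈ M(x_s, x_t)`,
send each cell `(i, j)` to a branch `k` attaining `ϑ^{j-i}`; the marginals of the branch plans are
feasible branch variables. Conversely, given branch variables, an optimal coupling of `y_s^k` and
`y_t^k` in every branch sums to a plan in `M(x_s, x_t)`, and `ϑ ≤ α^k |h| + β^k` on each branch.
Within a branch everything reduces to the `L¹` transport cost on a line, which equals
`Σ_t |Y_s^t - Y_t^t|`: every plan moves at least `|Y_s^t - Y_t^t|` across the threshold `t`, and the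
monotone (quantile) coupling moves exactly that much.
-/

open Finset

section Cumulative

variable {L : ℕ}

theorem cum_of_nonpos (x : Fin L → ℝ) {t : ℤ} (ht : t ≤ 0) : cum x t = 0 :=
  sum_eq_zero fun j _ ↦ if_neg (by omega)

theorem cum_of_le (x : Fin L → ℝ) {t : ℤ} (ht : L ≤ t) : cum x t = ∑ j, x j :=
  sum_congr rfl fun j _ ↦ if_pos (by omega)

theorem cum_mono {x : Fin L → ℝ} (hx : ∀ i, 0 ≤ x i) : Monotone (cum x) := fun s t hst ↦
  sum_le_sum fun j _ ↦ by split_ifs <;> first | exact le_rfl | exact hx j | omega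

theorem cum_add_one (x : Fin L → ℝ) (i : Fin L) : cum x (i + 1) = cum x i + x i := by
  have h : ∀ j : Fin L, (if (j : ℤ) < i + 1 then x j else 0)
      = (if (j : ℤ) < i then x j else 0) + if i = j then x j else 0 := fun j ↦ by
    split_ifs <;> simp only [Fin.ext_iff] at * <;> first | omega | simp
  simp only [cum, h, sum_add_distrib, sum_ite_eq, mem_univ, if_true]

theorem tsum_abs_cum_sub {μ ν : Fin L → ℝ} (hm : ∑ i, μ i = ∑ i, ν i) :
    ∑' t : ℤ, |cum μ t - cum ν t| = ∑ t ∈ Ioo 0 (L : ℤ), |cum μ t - cum ν t| := by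
  refine tsum_eq_sum fun t ht ↦ ?_
  rcases le_or_gt t 0 with ht0 | ht0
  · simp [cum_of_nonpos _ ht0]
  · have htL : (L : ℤ) ≤ t := by simp only [mem_Ioo, not_and, not_lt] at ht; exact ht ht0
    simp [cum_of_le _ htL, hm]

end Cumulative

section Coupling

variable {ι κ : Type*} [Fintype ι] [Fintype κ]

structure IsCoupling (π : ι → κ → ℝ) (μ : ι → ℝ) (ν : κ → ℝ) : Prop where
  nonneg : ∀ i j, 0 ≤ π i j
  sum_row : ∀ i, ∑ j, π i j = μ i
  sum_col : ∀ j, ∑ i, π i j = ν j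

theorem IsCoupling.of_nonneg {π : ι → κ → ℝ} (hπ : ∀ i j, 0 ≤ π i j) :
    IsCoupling π (fun i ↦ ∑ j, π i j) (fun j ↦ ∑ i, π i j) :=
  ⟨hπ, fun _ ↦ rfl, fun _ ↦ rfl⟩

theorem isCoupling_sum {σ : Type*} [Fintype σ] {π : σ → ι → κ → ℝ} {μ : σ → ι → ℝ}
    {ν : σ → κ → ℝ} (h : ∀ k, IsCoupling (π k) (μ k) (ν k)) :
    IsCoupling (fun i j ↦ ∑ k, π k i j) (fun i ↦ ∑ k, μ k i) (fun j ↦ ∑ k, ν k j) where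
  nonneg i j := sum_nonneg fun k _ ↦ (h k).nonneg i j
  sum_row i := by rw [sum_comm]; exact sum_congr rfl fun k _ ↦ (h k).sum_row i
  sum_col j := by rw [sum_comm]; exact sum_congr rfl fun k _ ↦ (h k).sum_col j

variable {π : ι → κ → ℝ} {μ : ι → ℝ} {ν : κ → ℝ}

theorem IsCoupling.sum_sum_eq_left (h : IsCoupling π μ ν) : ∑ i, ∑ j, π i j = ∑ i, μ i :=
  sum_congr rfl fun i _ ↦ h.sum_row i

theorem IsCoupling.sum_sum_eq_right (h : IsCoupling π μ ν) : ∑ i, ∑ j, π i j = ∑ j, ν j := by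
  rw [sum_comm]; exact sum_congr rfl fun j _ ↦ h.sum_col j

theorem IsCoupling.sum_eq (h : IsCoupling π μ ν) : ∑ i, μ i = ∑ j, ν j :=
  h.sum_sum_eq_left.symm.trans h.sum_sum_eq_right

end Coupling

theorem mem_marg_iff {L : ℕ} {xs xt : Fin L → ℝ} {x : Fin L → Fin L → ℝ} :
    x ∈ marg L xs xt ↔ IsCoupling x xs xt ∧ ∑ i, xs i = 1 := by
  constructor
  · rintro ⟨hx, htot, hrow, hcol⟩
    have h : IsCoupling x xs xt := ⟨hx, fun i ↦ (hrow i).symm, fun j ↦ (hcol j).symm⟩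
    exact ⟨h, h.sum_sum_eq_left ▸ htot⟩
  · rintro ⟨h, htot⟩
    exact ⟨h.nonneg, h.sum_sum_eq_left ▸ htot, fun i ↦ (h.sum_row i).symm,
      fun j ↦ (h.sum_col j).symm⟩

section Transport

variable {L : ℕ}

noncomputable def transportCost (π : Fin L → Fin L → ℝ) : ℝ :=
  ∑ i : Fin L, ∑ j : Fin L, ((|(j : ℤ) - (i : ℤ)| : ℤ) : ℝ) * π i j

noncomputable def upwardFlow (π : Fin L → Fin L → ℝ) (t : ℤ) : ℝ :=
  ∑ i : Fin L, ∑ j : Fin L, if (i : ℤ) < t ∧ t ≤ j then π i j else 0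

noncomputable def downwardFlow (π : Fin L → Fin L → ℝ) (t : ℤ) : ℝ :=
  ∑ i : Fin L, ∑ j : Fin L, if (j : ℤ) < t ∧ t ≤ i then π i j else 0

theorem downwardFlow_eq_upwardFlow_swap (π : Fin L → Fin L → ℝ) (t : ℤ) :
    downwardFlow π t = upwardFlow (fun i j ↦ π j i) t :=
  sum_comm

theorem upwardFlow_nonneg {π : Fin L → Fin L → ℝ} (hπ : ∀ i j, 0 ≤ π i j) (t : ℤ) :
    0 ≤ upwardFlow π t :=
  sum_nonneg fun i _ ↦ sum_nonneg fun j _ ↦ ite_nonneg (hπ i j) le_rfl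

theorem intCast_abs_sub_eq_sum_Ioo (i j : Fin L) :
    ((|(j : ℤ) - (i : ℤ)| : ℤ) : ℝ) = ∑ t ∈ Ioo 0 (L : ℤ),
      ((if (i : ℤ) < t ∧ t ≤ j then 1 else 0) + if (j : ℤ) < t ∧ t ≤ i then 1 else 0) := by
  have hfilter (a b : Fin L) : {t ∈ Ioo 0 (L : ℤ) | (a : ℤ) < t ∧ t ≤ b} = Ioc (a : ℤ) b := by
    ext t; have := b.isLt; simp only [mem_filter, mem_Ioo, mem_Ioc]; omega
  rw [sum_add_distrib, sum_boole, sum_boole, hfilter, hfilter, Int.card_Ioc, Int.card_Ioc,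
    ← neg_sub (j : ℤ), Int.toNat_add_toNat_neg_eq_norm, Int.norm_eq_abs, Int.cast_abs]

theorem transportCost_eq_sum_flow (π : Fin L → Fin L → ℝ) :
    transportCost π = ∑ t ∈ Ioo 0 (L : ℤ), (upwardFlow π t + downwardFlow π t) := by
  simp only [upwardFlow, downwardFlow, ← sum_add_distrib, transportCost,
    intCast_abs_sub_eq_sum_Ioo, sum_mul]
  symm
  rw [sum_comm]
  refine sum_congr rfl fun i _ ↦ ?_
  rw [sum_comm]
  refine sum_congr rfl fun j _ ↦ sum_congr rfl fun t _ ↦ ?_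
  split_ifs <;> first | (exfalso; omega) | simp

theorem IsCoupling.cum_sub_cum {π : Fin L → Fin L → ℝ} {μ ν : Fin L → ℝ}
    (h : IsCoupling π μ ν) (t : ℤ) :
    cum μ t - cum ν t = upwardFlow π t - downwardFlow π t := by
  have hμ : cum μ t = ∑ i : Fin L, ∑ j : Fin L, if (i : ℤ) < t then π i j else 0 := by
    simp only [cum, ← h.sum_row]
    exact sum_congr rfl fun i _ ↦ by split_ifs <;> simp
  have hν : cum ν t = ∑ i : Fin L, ∑ j : Fin L, if (j : ℤ) < t then π i j else 0 := by
    simp only [cum, ← h.sum_col]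
    rw [sum_comm]
    exact sum_congr rfl fun j _ ↦ by split_ifs <;> simp
  rw [hμ, hν, upwardFlow, downwardFlow, ← sum_sub_distrib, ← sum_sub_distrib]
  refine sum_congr rfl fun i _ ↦ ?_
  rw [← sum_sub_distrib, ← sum_sub_distrib]
  refine sum_congr rfl fun j _ ↦ ?_
  split_ifs <;> first | (exfalso; omega) | simp

theorem IsCoupling.tsum_abs_cum_sub_le {π : Fin L → Fin L → ℝ} {μ ν : Fin L → ℝ}
    (h : IsCoupling π μ ν) : ∑' t : ℤ, |cum μ t - cum ν t| ≤ transportCost π := by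
  rw [tsum_abs_cum_sub h.sum_eq, transportCost_eq_sum_flow]
  refine sum_le_sum fun t _ ↦ ?_
  have h₁ := upwardFlow_nonneg h.nonneg t
  have h₂ := upwardFlow_nonneg (π := fun i j ↦ π j i) (fun i j ↦ h.nonneg j i) t
  rw [h.cum_sub_cum, downwardFlow_eq_upwardFlow_swap]
  exact abs_sub_le_of_nonneg_of_le h₁ (by linarith) h₂ (by linarith)

end Transport

noncomputable def intervalOverlap (a b c d : ℝ) : ℝ := max 0 (min b d - max a c)

theorem intervalOverlap_comm (a b c d : ℝ) : intervalOverlap a b c d = intervalOverlap c d a b := by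
  rw [intervalOverlap, intervalOverlap, min_comm, max_comm a]

theorem intervalOverlap_eq_sub {a b c d : ℝ} (hab : a ≤ b) (hcd : c ≤ d) :
    intervalOverlap a b c d = max a (min b d) - max a (min b c) := by
  simp only [intervalOverlap, max_def, min_def]
  split_ifs <;> linarith

theorem intervalOverlap_of_le {a b c d : ℝ} (hca : c ≤ a) (hab : a ≤ b) (hbd : b ≤ d) :
    intervalOverlap a b c d = b - a := by
  rw [intervalOverlap, min_eq_left hbd, max_eq_left hca, max_eq_right (sub_nonneg.2 hab)]

theorem sum_intervalOverlap_Ico {a b : ℝ} (hab : a ≤ b) {B : ℕ → ℝ} (hB : Monotone B)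
    {p q : ℕ} (hpq : p ≤ q) :
    ∑ n ∈ Ico p q, intervalOverlap a b (B n) (B (n + 1)) = intervalOverlap a b (B p) (B q) := by
  rw [intervalOverlap_eq_sub hab (hB hpq), ← sum_Ico_sub (fun n ↦ max a (min b (B n))) hpq]
  exact sum_congr rfl fun n _ ↦ intervalOverlap_eq_sub hab (hB n.le_succ)

section QuantileCoupling

variable {A B : ℕ → ℝ}

/-- The monotone coupling of the distributions with cumulative sums `A` and `B`: it sends from `m`
to `n` the overlap of the `m`-th step `[A m, A (m + 1)]` of `A` with the `n`-th step of `B`. -/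
noncomputable def quantileCoupling (A B : ℕ → ℝ) (m n : ℕ) : ℝ :=
  intervalOverlap (A m) (A (m + 1)) (B n) (B (n + 1))

theorem quantileCoupling_swap (A B : ℕ → ℝ) (m n : ℕ) :
    quantileCoupling B A n m = quantileCoupling A B m n :=
  intervalOverlap_comm _ _ _ _

theorem quantileCoupling_nonneg (A B : ℕ → ℝ) (m n : ℕ) : 0 ≤ quantileCoupling A B m n :=
  le_max_left _ _

variable (hA : Monotone A) (hB : Monotone B) {L : ℕ} (h0 : A 0 = B 0) (hL : A L = B L)
include hA hB h0 hL

theorem sum_quantileCoupling {m : ℕ} (hm : m < L) :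
    ∑ n ∈ range L, quantileCoupling A B m n = A (m + 1) - A m := by
  simp only [range_eq_Ico, quantileCoupling]
  rw [sum_intervalOverlap_Ico (hA m.le_succ) hB L.zero_le,
    intervalOverlap_of_le (h0.symm.trans_le (hA m.zero_le)) (hA m.le_succ) (hL ▸ hA hm)]

theorem sum_sum_quantileCoupling_crossing {τ : ℕ} (hτ : τ ≤ L) :
    ∑ m ∈ range τ, ∑ n ∈ Ico τ L, quantileCoupling A B m n = max 0 (A τ - B τ) := by
  simp_rw [quantileCoupling, sum_intervalOverlap_Ico (hA (Nat.le_succ _)) hB hτ,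
    intervalOverlap_comm _ _ (B τ), range_eq_Ico, sum_intervalOverlap_Ico (hB hτ) hA τ.zero_le]
  rw [intervalOverlap, min_eq_right (hL ▸ hA hτ),
    max_eq_left (a := B τ) (h0.trans_le (hB τ.zero_le))]

end QuantileCoupling

theorem sum_fin_crossing_eq_sum_range_sum_Ico {L τ : ℕ} (hτ : τ ≤ L) (P : ℕ → ℕ → ℝ) :
    ∑ i : Fin L, ∑ j : Fin L, (if (i : ℤ) < τ ∧ (τ : ℤ) ≤ j then P i j else 0)
      = ∑ m ∈ range τ, ∑ n ∈ Ico τ L, P m n := by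
  have hlt : {m ∈ range L | m < τ} = range τ := by ext; simp; omega
  have hle : {n ∈ range L | τ ≤ n} = Ico τ L := by ext; simp; omega
  rw [← hlt, sum_filter, sum_range]
  refine sum_congr rfl fun i _ ↦ ?_
  rw [← hle, sum_filter, sum_range]
  split_ifs with hi <;> simp [hi]

section QuantilePlan

variable {L : ℕ} {μ ν : Fin L → ℝ}

noncomputable def quantilePlan (μ ν : Fin L → ℝ) (i j : Fin L) : ℝ :=
  quantileCoupling (fun n : ℕ ↦ cum μ n) (fun n : ℕ ↦ cum ν n) i j

theorem quantilePlan_swap (μ ν : Fin L → ℝ) (i j : Fin L) :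
    quantilePlan ν μ j i = quantilePlan μ ν i j :=
  quantileCoupling_swap _ _ _ _

theorem monotone_cum_natCast (hμ : ∀ i, 0 ≤ μ i) : Monotone fun n : ℕ ↦ cum μ n :=
  (cum_mono hμ).comp Nat.mono_cast

variable (hμ : ∀ i, 0 ≤ μ i) (hν : ∀ i, 0 ≤ ν i) (hm : ∑ i, μ i = ∑ i, ν i)
include hμ hν hm

theorem sum_quantilePlan_row (i : Fin L) : ∑ j, quantilePlan μ ν i j = μ i := by
  have h := sum_quantileCoupling (monotone_cum_natCast hμ) (monotone_cum_natCast hν)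
    (by simp [cum_of_nonpos]) (by simp [cum_of_le, hm]) i.isLt
  rw [sum_range, Nat.cast_succ, cum_add_one, add_sub_cancel_left] at h
  exact h

theorem isCoupling_quantilePlan : IsCoupling (quantilePlan μ ν) μ ν where
  nonneg _ _ := quantileCoupling_nonneg _ _ _ _
  sum_row := sum_quantilePlan_row hμ hν hm
  sum_col j := by
    simp_rw [← quantilePlan_swap μ]
    exact sum_quantilePlan_row hν hμ hm.symm j

theorem upwardFlow_quantilePlan {t : ℤ} (ht : t ∈ Ioo 0 (L : ℤ)) :
    upwardFlow (quantilePlan μ ν) t = max 0 (cum μ t - cum ν t) := by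
  rw [mem_Ioo] at ht
  lift t to ℕ using ht.1.le
  simp only [upwardFlow, quantilePlan]
  rw [sum_fin_crossing_eq_sum_range_sum_Ico (by omega)]
  exact sum_sum_quantileCoupling_crossing (monotone_cum_natCast hμ) (monotone_cum_natCast hν)
    (by simp [cum_of_nonpos]) (by simp [cum_of_le, hm]) (by omega)

end QuantilePlan

theorem max_zero_sub_add_max_zero_sub (a b : ℝ) : max 0 (a - b) + max 0 (b - a) = |a - b| := by
  rcases le_total a b with h | h
  · rw [max_eq_left (by linarith), max_eq_right (by linarith), abs_of_nonpos (by linarith)]; ring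
  · rw [max_eq_right (by linarith), max_eq_left (by linarith), abs_of_nonneg (by linarith)]; ring

theorem exists_isCoupling_transportCost_eq {L : ℕ} {μ ν : Fin L → ℝ} (hμ : ∀ i, 0 ≤ μ i)
    (hν : ∀ i, 0 ≤ ν i) (hm : ∑ i, μ i = ∑ i, ν i) :
    ∃ π, IsCoupling π μ ν ∧ transportCost π = ∑' t : ℤ, |cum μ t - cum ν t| := by
  refine ⟨quantilePlan μ ν, isCoupling_quantilePlan hμ hν hm, ?_⟩
  rw [tsum_abs_cum_sub hm, transportCost_eq_sum_flow]
  refine sum_congr rfl fun t ht ↦ ?_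
  rw [downwardFlow_eq_upwardFlow_swap]
  simp_rw [quantilePlan_swap ν]
  rw [upwardFlow_quantilePlan hμ hν hm ht, upwardFlow_quantilePlan hν hμ hm.symm ht,
    max_zero_sub_add_max_zero_sub]

theorem IsCoupling.sum_sum_affine_mul {L : ℕ} {π : Fin L → Fin L → ℝ} {μ ν : Fin L → ℝ}
    (h : IsCoupling π μ ν) (a b : ℝ) :
    ∑ i : Fin L, ∑ j : Fin L, (a * ((|(j : ℤ) - (i : ℤ)| : ℤ) : ℝ) + b) * π i j
      = a * transportCost π + b / 2 * ((∑ i, μ i) + ∑ i, ν i) := by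
  simp only [add_mul, sum_add_distrib, mul_assoc, ← mul_sum, transportCost]
  rw [← h.sum_sum_eq_left, ← h.sum_sum_eq_right]
  ring

theorem IsCoupling.affine_le {L : ℕ} {π : Fin L → Fin L → ℝ} {μ ν : Fin L → ℝ}
    (h : IsCoupling π μ ν) {a : ℝ} (ha : 0 ≤ a) (b : ℝ) :
    a * ∑' t : ℤ, |cum μ t - cum ν t| + b / 2 * ((∑ i, μ i) + ∑ i, ν i)
      ≤ ∑ i : Fin L, ∑ j : Fin L, (a * ((|(j : ℤ) - (i : ℤ)| : ℤ) : ℝ) + b) * π i j := by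
  rw [h.sum_sum_affine_mul]
  gcongr
  exact h.tsum_abs_cum_sub_le

theorem exists_isCoupling_affine_eq {L : ℕ} {μ ν : Fin L → ℝ} (hμ : ∀ i, 0 ≤ μ i)
    (hν : ∀ i, 0 ≤ ν i) (hm : ∑ i, μ i = ∑ i, ν i) (a b : ℝ) :
    ∃ π, IsCoupling π μ ν ∧
      ∑ i : Fin L, ∑ j : Fin L, (a * ((|(j : ℤ) - (i : ℤ)| : ℤ) : ℝ) + b) * π i j
        = a * ∑' t : ℤ, |cum μ t - cum ν t| + b / 2 * ((∑ i, μ i) + ∑ i, ν i) := by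
  obtain ⟨π, hπ, hcost⟩ := exists_isCoupling_transportCost_eq hμ hν hm
  exact ⟨π, hπ, by rw [hπ.sum_sum_affine_mul, hcost]⟩

theorem ciInf_eq_ciInf_of_forall_exists_le {α : Type*} {ι ι' : Sort*}
    [ConditionallyCompleteLinearOrder α] {f : ι → α} {g : ι' → α}
    (hf : ∀ i, ∃ j, g j ≤ f i) (hg : ∀ j, ∃ i, f i ≤ g j) :
    ⨅ i, f i = ⨅ j, g j :=
  csInf_eq_csInf_of_forall_exists_le
    (by rintro _ ⟨i, rfl⟩; obtain ⟨j, hj⟩ := hf i; exact ⟨g j, ⟨j, rfl⟩, hj⟩)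
    (by rintro _ ⟨j, rfl⟩; obtain ⟨i, hi⟩ := hg j; exact ⟨f i, ⟨i, rfl⟩, hi⟩)

section MinSplit

variable {ι κ σ : Type*} [Fintype ι] [Fintype κ] [Fintype σ] (w : σ → ι → κ → ℝ)

theorem sum_sum_sum_rotate (f : σ → ι → κ → ℝ) :
    ∑ i, ∑ j, ∑ k, f k i j = ∑ k, ∑ i, ∑ j, f k i j :=
  (sum_congr rfl fun _ _ ↦ sum_comm).trans sum_comm

theorem sum_iInf_mul_sum_le {π : σ → ι → κ → ℝ} (hπ : ∀ k i j, 0 ≤ π k i j) :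
    ∑ i, ∑ j, (⨅ k, w k i j) * ∑ k, π k i j ≤ ∑ k, ∑ i, ∑ j, w k i j * π k i j := by
  rw [← sum_sum_sum_rotate]
  simp only [mul_sum]
  gcongr with i _ j _ k _
  · exact hπ k i j
  · exact ciInf_le (Finite.bddBelow_range _) k

theorem exists_split_sum_iInf_mul [Nonempty σ] {x : ι → κ → ℝ} (hx : ∀ i j, 0 ≤ x i j) :
    ∃ π : σ → ι → κ → ℝ, (∀ k i j, 0 ≤ π k i j) ∧ (∀ i j, ∑ k, π k i j = x i j) ∧
      ∑ k, ∑ i, ∑ j, w k i j * π k i j = ∑ i, ∑ j, (⨅ k, w k i j) * x i j := by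
  classical
  choose k₀ hk₀ using fun i j ↦ exists_eq_ciInf_of_finite (f := fun k ↦ w k i j)
  refine ⟨fun k i j ↦ if k₀ i j = k then x i j else 0, fun k i j ↦ ite_nonneg (hx i j) le_rfl,
    fun i j ↦ by simp, ?_⟩
  rw [← sum_sum_sum_rotate]
  simp [mul_ite, hk₀]

end MinSplit

theorem min_L1_compact_reformulation_general {L K : ℕ} (hK : 0 < K)
    (α β : Fin K → ℝ) (hα : ∀ k, 0 ≤ α k)
    (xs xt : Fin L → ℝ)
    (hxs : xs ∈ stdSimplex ℝ (Fin L)) :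
    (⨅ x : ↥(marg L xs xt),
        ∑ i : Fin L, ∑ j : Fin L,
          (⨅ k, (α k * ((|(j : ℤ) - (i : ℤ)| : ℤ) : ℝ) + β k)) * x.1 i j)
      = ⨅ p : {p : (Fin K → Fin L → ℝ) × (Fin K → Fin L → ℝ) //
            (∀ k i, 0 ≤ p.1 k i) ∧ (∀ k i, 0 ≤ p.2 k i) ∧
            (∀ i, ∑ k, p.1 k i = xs i) ∧ (∀ i, ∑ k, p.2 k i = xt i) ∧
            (∀ k, ∑ i, p.1 k i = ∑ i, p.2 k i)},
          ∑ k, (α k * ∑' i : ℤ, |cum (p.1.1 k) i - cum (p.1.2 k) i|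
            + β k / 2 * ((∑ i, p.1.1 k i) + ∑ i, p.1.2 k i)) := by
  have : Nonempty (Fin K) := ⟨⟨0, hK⟩⟩
  apply ciInf_eq_ciInf_of_forall_exists_le
  · rintro ⟨x, hmem⟩
    have hx := (mem_marg_iff.1 hmem).1
    obtain ⟨π, hπ, hπx, hcost⟩ :=
      exists_split_sum_iInf_mul (fun k (i j : Fin L) ↦ α k * ((|(j : ℤ) - i| : ℤ) : ℝ) + β k)
        hx.nonneg
    have hsplit k := IsCoupling.of_nonneg (hπ k)
    refine ⟨⟨(fun k i ↦ ∑ j, π k i j, fun k j ↦ ∑ i, π k i j),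
      fun k i ↦ sum_nonneg fun j _ ↦ hπ k i j, fun k j ↦ sum_nonneg fun i _ ↦ hπ k i j,
      fun i ↦ ?_, fun j ↦ ?_, fun k ↦ (hsplit k).sum_eq⟩, ?_⟩
    · rw [sum_comm]; simp_rw [hπx]; exact hx.sum_row i
    · rw [sum_comm]; simp_rw [hπx]; exact hx.sum_col j
    · exact (sum_le_sum fun k _ ↦ (hsplit k).affine_le (hα k) (β k)).trans_eq hcost
  · rintro ⟨⟨ys, yt⟩, hys, hyt, hs, ht, hmass⟩
    choose π hπ hcost using
      fun k ↦ exists_isCoupling_affine_eq (hys k) (hyt k) (hmass k) (α k) (β k)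
    have hx : IsCoupling (fun i j ↦ ∑ k, π k i j) xs xt := by
      simpa only [hs, ht] using isCoupling_sum hπ
    refine ⟨⟨_, mem_marg_iff.2 ⟨hx, hxs.2⟩⟩, ?_⟩
    exact (sum_iInf_mul_sum_le _ fun k ↦ (hπ k).nonneg).trans_eq (sum_congr rfl fun k _ ↦ hcost k)

/-- for a min-of-`L¹` potential `ϑ(h) = min_k (α^k |h| + β^k)`,
the standard per-edge LP value over the transportation polytope equals the
optimal value of the compact reformulation `E_min-L¹` with branch variables. -/
theorem min_L1_compact_reformulation {L K : ℕ} (hL : 0 < L) (hK : 0 < K)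
    (α β : Fin K → ℝ) (hα : ∀ k, 0 ≤ α k) (hβ : ∀ k, 0 ≤ β k)
    (xs xt : Fin L → ℝ)
    (hxs : xs ∈ stdSimplex ℝ (Fin L)) (hxt : xt ∈ stdSimplex ℝ (Fin L)) :
    (⨅ x : ↥(marg L xs xt),
        ∑ i : Fin L, ∑ j : Fin L,
          (⨅ k, (α k * ((|(j : ℤ) - (i : ℤ)| : ℤ) : ℝ) + β k)) * x.1 i j)
      = ⨅ p : {p : (Fin K → Fin L → ℝ) × (Fin K → Fin L → ℝ) //
            (∀ k i, 0 ≤ p.1 k i) ∧ (∀ k i, 0 ≤ p.2 k i) ∧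
            (∀ i, ∑ k, p.1 k i = xs i) ∧ (∀ i, ∑ k, p.2 k i = xt i) ∧
            (∀ k, ∑ i, p.1 k i = ∑ i, p.2 k i)},
          ∑ k, (α k * ∑' i : ℤ, |cum (p.1.1 k) i - cum (p.1.2 k) i|
            + β k / 2 * ((∑ i, p.1.1 k i) + ∑ i, p.1.2 k i)) :=
  min_L1_compact_reformulation_general hK α β hα xs xt hxs
end
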